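/- arXiv:2106.05241 — 2 statements merged into one kernel-verified Lean document; each statement's English description precedes it below -/
import Mathlib

section
/- Under the stated setup, Z* = 1 if and only if for every c ∈ C the function z ↦ p z c is μ-almost everywhere equal to a constant. Consequently, the minimum value −log Z* of the objective F over probability mass functions on C equals zero if and only if, for every c ∈ C, p(· , c) is μ-almost everywhere constant. -/
/-!
By Jensen's inequality for the strictly convex `exp`, the geometric mean `exp (∫ log p(·, c))`
is at most the arithmetic mean `∫ p(·, c)`, with equality exactly when `p(·, c)` is a.e.
constant. Summing over `c`, `Z* ≤ ∑ c, ∫ p(·, c) = ∫ ∑ c, p(·, c) = 1`, and equality holds iff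
it holds termwise.
-/

open MeasureTheory Real

section GeometricMean

variable {Z : Type*} [MeasurableSpace Z] {μ : Measure Z} [IsProbabilityMeasure μ] {g : Z → ℝ}

theorem exp_integral_log_le_integral (hg : ∀ z, 0 < g z)
    (hlog : Integrable (fun z => log (g z)) μ) (hint : Integrable g μ) :
    exp (∫ z, log (g z) ∂μ) ≤ ∫ z, g z ∂μ := by
  have h := convexOn_exp.map_integral_le continuous_exp.continuousOn isClosed_univ
    (Filter.Eventually.of_forall fun z => Set.mem_univ (log (g z))) hlog
    (by simpa [Function.comp_def, exp_log (hg _)] using hint)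
  simpa only [exp_log (hg _)] using h

theorem exp_integral_log_eq_integral_iff (hg : ∀ z, 0 < g z)
    (hlog : Integrable (fun z => log (g z)) μ) (hint : Integrable g μ) :
    exp (∫ z, log (g z) ∂μ) = ∫ z, g z ∂μ ↔ ∃ a, ∀ᵐ z ∂μ, g z = a := by
  constructor
  · intro heq
    have hjensen := strictConvexOn_exp.ae_eq_const_or_map_average_lt continuous_exp.continuousOn
      isClosed_univ (Filter.Eventually.of_forall fun z => Set.mem_univ (log (g z))) hlog
      (by simpa [Function.comp_def, exp_log (hg _)] using hint)
    simp only [average_eq_integral, exp_log (hg _)] at hjensen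
    rcases hjensen with hconst | hlt
    · refine ⟨exp (∫ z, log (g z) ∂μ), ?_⟩
      filter_upwards [hconst] with z hz
      rw [← exp_log (hg z), hz, Function.const_apply]
    · exact absurd heq hlt.ne
  · rintro ⟨a, ha⟩
    obtain ⟨z₀, hz₀⟩ := ha.exists
    have hlog_ae : (fun z => log (g z)) =ᵐ[μ] fun _ => log a := by
      filter_upwards [ha] with z hz
      rw [hz]
    rw [integral_congr_ae hlog_ae, integral_congr_ae ha, integral_const, integral_const,
      probReal_univ, one_smul, one_smul, exp_log (hz₀ ▸ hg z₀)]

end GeometricMean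

section StochasticKernel

variable {Z : Type*} [MeasurableSpace Z] {μ : Measure Z} {C : Type*} [Fintype C]
  {p : Z → C → ℝ}

theorem integrable_of_integrable_log_of_sum_eq_one [IsFiniteMeasure μ] {c : C}
    (hpos : ∀ z c, 0 < p z c) (hsum : ∀ z, ∑ c, p z c = 1)
    (hlog : Integrable (fun z => log (p z c)) μ) :
    Integrable (fun z => p z c) μ := by
  have hmeas : AEStronglyMeasurable (fun z => p z c) μ := by
    simpa only [exp_log (hpos _ c)] using hlog.aemeasurable.exp.aestronglyMeasurable
  refine Integrable.of_bound hmeas 1 (Filter.Eventually.of_forall fun z => ?_)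
  rw [norm_of_nonneg (hpos z c).le, ← hsum z]
  exact Finset.single_le_sum (fun c' _ => (hpos z c').le) (Finset.mem_univ c)

theorem sum_integral_eq_one [IsProbabilityMeasure μ] (hsum : ∀ z, ∑ c, p z c = 1)
    (hint : ∀ c, Integrable (fun z => p z c) μ) : ∑ c, ∫ z, p z c ∂μ = 1 := by
  rw [← integral_finsetSum _ fun c _ => hint c]
  simp [hsum]

end StochasticKernel

theorem vade_normalizer_eq_one_iff_general
    {Z : Type*} [MeasurableSpace Z] (μ : Measure Z) [IsProbabilityMeasure μ]
    {C : Type*} [Fintype C] [Nonempty C]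
    (p : Z → C → ℝ)
    (hpos : ∀ z c, 0 < p z c)
    (hsum : ∀ z, ∑ c, p z c = 1)
    (hint : ∀ c, Integrable (fun z => Real.log (p z c)) μ)
    (Zstar : ℝ) (hZstar : Zstar = ∑ c, Real.exp (∫ z, Real.log (p z c) ∂μ)) :
    (Zstar = 1 ↔ ∀ c, ∃ a : ℝ, ∀ᵐ z ∂μ, p z c = a)
    ∧ (- Real.log Zstar = 0 ↔ ∀ c, ∃ a : ℝ, ∀ᵐ z ∂μ, p z c = a) := by
  have hint_p c := integrable_of_integrable_log_of_sum_eq_one hpos hsum (hint c)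
  have hle c := exp_integral_log_le_integral (hpos · c) (hint c) (hint_p c)
  have hZstar_eq_one : Zstar = 1 ↔ ∀ c, ∃ a : ℝ, ∀ᵐ z ∂μ, p z c = a := by
    rw [hZstar, ← sum_integral_eq_one hsum hint_p,
      Finset.sum_eq_sum_iff_of_le fun c _ => hle c]
    simp only [Finset.mem_univ, true_implies,
      exp_integral_log_eq_integral_iff (hpos · _) (hint _) (hint_p _)]
  have hZstar_pos : 0 < Zstar :=
    hZstar ▸ Finset.sum_pos (fun c _ => exp_pos _) Finset.univ_nonempty
  refine ⟨hZstar_eq_one, ?_⟩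
  rw [← hZstar_eq_one, neg_eq_zero]
  exact ⟨fun h => by rw [← exp_log hZstar_pos, h, exp_zero], fun h => h ▸ log_one⟩

/-- `Z* = 1` iff each `p (·) c` is `μ`-a.e. constant; consequently the minimum value
`−log Z*` of the objective equals zero iff each `p (·) c` is `μ`-a.e. constant. -/
theorem vade_normalizer_eq_one_iff
    {Z : Type*} [MeasurableSpace Z] (μ : Measure Z) [IsProbabilityMeasure μ]
    {C : Type*} [Fintype C] [Nonempty C]
    (p : Z → C → ℝ)
    (hpos : ∀ z c, 0 < p z c)
    (hsum : ∀ z, ∑ c, p z c = 1)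
    (hmeas : ∀ c, Measurable fun z => Real.log (p z c))
    (hint : ∀ c, Integrable (fun z => Real.log (p z c)) μ)
    (Zstar : ℝ) (hZstar : Zstar = ∑ c, Real.exp (∫ z, Real.log (p z c) ∂μ)) :
    (Zstar = 1 ↔ ∀ c, ∃ a : ℝ, ∀ᵐ z ∂μ, p z c = a)
    ∧ (- Real.log Zstar = 0 ↔ ∀ c, ∃ a : ℝ, ∀ᵐ z ∂μ, p z c = a) :=
  vade_normalizer_eq_one_iff_general μ p hpos hsum hint Zstar hZstar
end

section
/- (Multi-Facet VaDE Trick for factorized posterior and prior.) Under the stated multi-facet setup, the function c ↦ Π_{j=1}^J π_j (c_j) is a probability mass function on Π_j C_j, and for every probability mass function q on Π_j C_j one has F(q) ≥ −Σ_{j=1}^J log Z_j*, with equality if and only if q c = Π_{j=1}^J π_j (c_j) for all c. In other words, the unique minimizer over pmfs q of the expected KL divergence E_{z∼μ} KL[q ∥ P(·∣z)] is the product of the per-facet softmax pmfs, and the minimum value attained is −Σ_{j=1}^J log Z_j*. -/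
/-! Since `P z c = ∏ⱼ pⱼ (zⱼ) (cⱼ)` and the coordinates of `z` have laws `μⱼ` under the product
measure, `∫ log (P z c) dμ = ∑ⱼ aⱼ (cⱼ)` with `aⱼ := ∫ log pⱼ · dμⱼ`. Writing `w := ∏ⱼ softmax aⱼ`,
one has `log (w c) = ∑ⱼ aⱼ (cⱼ) - ∑ⱼ log Zⱼ*`, so `F q = KL(q ‖ w) - ∑ⱼ log Zⱼ*`, and Gibbs'
inequality `KL(q ‖ w) ≥ 0`, with equality iff `q = w`, finishes the proof. -/

open MeasureTheory Real BigOperators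
open InformationTheory (klFun klFun_apply klFun_zero klFun_nonneg klFun_eq_zero_iff)

section Gibbs

lemma mul_log_sub_log_eq_klFun {x y : ℝ} (hy : 0 < y) :
    x * (log x - log y) = y * klFun (x / y) + (x - y) := by
  rcases eq_or_ne x 0 with rfl | hx
  · simp [klFun_zero]
  · rw [klFun_apply, log_div hx hy.ne']
    field_simp
    ring

variable {D : Type*} [Fintype D] {q w : D → ℝ}

lemma sum_mul_log_sub_log_eq_sum_klFun (hw : ∀ c, 0 < w c) (hsum : ∑ c, q c = ∑ c, w c) :
    ∑ c, q c * (log (q c) - log (w c)) = ∑ c, w c * klFun (q c / w c) := by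
  simp only [fun c => mul_log_sub_log_eq_klFun (x := q c) (hw c), Finset.sum_add_distrib,
    Finset.sum_sub_distrib, hsum, sub_self, add_zero]

lemma sum_mul_log_sub_log_nonneg (hq : ∀ c, 0 ≤ q c) (hw : ∀ c, 0 < w c)
    (hsum : ∑ c, q c = ∑ c, w c) : 0 ≤ ∑ c, q c * (log (q c) - log (w c)) := by
  rw [sum_mul_log_sub_log_eq_sum_klFun hw hsum]
  exact Finset.sum_nonneg fun c _ => mul_nonneg (hw c).le <|
    klFun_nonneg (div_nonneg (hq c) (hw c).le)

lemma sum_mul_log_sub_log_eq_zero_iff (hq : ∀ c, 0 ≤ q c) (hw : ∀ c, 0 < w c)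
    (hsum : ∑ c, q c = ∑ c, w c) :
    ∑ c, q c * (log (q c) - log (w c)) = 0 ↔ ∀ c, q c = w c := by
  have hterm : ∀ c, 0 ≤ w c * klFun (q c / w c) := fun c =>
    mul_nonneg (hw c).le (klFun_nonneg (div_nonneg (hq c) (hw c).le))
  rw [sum_mul_log_sub_log_eq_sum_klFun hw hsum,
    Finset.sum_eq_zero_iff_of_nonneg fun c _ => hterm c]
  refine forall_congr' fun c => ?_
  rw [mul_eq_zero, or_iff_right (hw c).ne', klFun_eq_zero_iff (div_nonneg (hq c) (hw c).le),
    div_eq_one_iff_eq (hw c).ne']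
  simp only [Finset.mem_univ, forall_const]

end Gibbs

section Softmax

variable {C : Type*} [Fintype C] [Nonempty C] (a : C → ℝ)

noncomputable def softmax (c : C) : ℝ := exp (a c) / ∑ c', exp (a c')

lemma sum_exp_pos : 0 < ∑ c, exp (a c) :=
  Finset.sum_pos (fun _ _ => exp_pos _) Finset.univ_nonempty

lemma softmax_pos (c : C) : 0 < softmax a c :=
  div_pos (exp_pos _) (sum_exp_pos a)

lemma sum_softmax : ∑ c, softmax a c = 1 := by
  simp only [softmax, ← Finset.sum_div, div_self (sum_exp_pos a).ne']

lemma log_softmax (c : C) : log (softmax a c) = a c - log (∑ c', exp (a c')) := by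
  rw [softmax.eq_def, log_div (exp_pos _).ne' (sum_exp_pos a).ne', log_exp]

end Softmax

lemma sum_prod_eq_one {R ι : Type*} [CommSemiring R] [Fintype ι] [DecidableEq ι] {C : ι → Type*}
    [∀ i, Fintype (C i)] {f : ∀ i, C i → R} (hf : ∀ i, ∑ c, f i c = 1) :
    ∑ c : ∀ i, C i, ∏ i, f i (c i) = 1 := by
  rw [← Fintype.prod_sum]
  exact Finset.prod_eq_one fun i _ => hf i

section LogProdPi

variable {ι : Type*} [Fintype ι] {Z : ι → Type*} [∀ i, MeasurableSpace (Z i)]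
  (μ : ∀ i, Measure (Z i)) {f : ∀ i, Z i → ℝ}

lemma integrable_log_prod_pi [∀ i, IsFiniteMeasure (μ i)] (hpos : ∀ i z, 0 < f i z)
    (hint : ∀ i, Integrable (fun z => log (f i z)) (μ i)) :
    Integrable (fun z => log (∏ i, f i (z i))) (Measure.pi μ) := by
  simp only [log_prod fun i _ => (hpos i _).ne']
  exact integrable_finsetSum _ fun i _ => integrable_comp_eval (hint i)

lemma integral_log_prod_pi [∀ i, IsProbabilityMeasure (μ i)] (hpos : ∀ i z, 0 < f i z)
    (hint : ∀ i, Integrable (fun z => log (f i z)) (μ i)) :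
    ∫ z, log (∏ i, f i (z i)) ∂Measure.pi μ = ∑ i, ∫ z, log (f i z) ∂μ i := by
  simp only [log_prod fun i _ => (hpos i _).ne']
  rw [integral_finsetSum _ fun i _ => integrable_comp_eval (hint i)]
  exact Finset.sum_congr rfl fun i _ => integral_comp_eval (hint i).aestronglyMeasurable

end LogProdPi

lemma integral_sum_mul_log_sub {Ω D : Type*} [MeasurableSpace Ω] [Fintype D] {ν : Measure Ω}
    [IsProbabilityMeasure ν] (q : D → ℝ) {L : D → Ω → ℝ} (hL : ∀ c, Integrable (L c) ν) :
    ∫ z, ∑ c, q c * (log (q c) - L c z) ∂ν = ∑ c, q c * (log (q c) - ∫ z, L c z ∂ν) := by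
  have hint : ∀ c, Integrable (fun z => q c * (log (q c) - L c z)) ν := fun c =>
    ((integrable_const _).sub (hL c)).const_mul _
  rw [integral_finsetSum _ fun c _ => hint c]
  refine Finset.sum_congr rfl fun c _ => ?_
  rw [integral_const_mul, integral_sub (integrable_const _) (hL c), integral_const, probReal_univ,
    one_smul]

theorem multi_facet_vade_trick_factorized_general
    {J : ℕ}
    {Z : Fin J → Type*} [∀ j, MeasurableSpace (Z j)]
    (μ : ∀ j, Measure (Z j)) [∀ j, IsProbabilityMeasure (μ j)]
    {C : Fin J → Type*} [∀ j, Fintype (C j)] [∀ j, Nonempty (C j)]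
    (p : ∀ j, Z j → C j → ℝ)
    (hpos : ∀ j (z : Z j) (c : C j), 0 < p j z c)
    (hint : ∀ j (c : C j), Integrable (fun z => Real.log (p j z c)) (μ j))
    (Zstar : Fin J → ℝ)
    (hZstar : ∀ j, Zstar j = ∑ c, Real.exp (∫ z, Real.log (p j z c) ∂(μ j)))
    (smx : ∀ j, C j → ℝ)
    (hsmx : ∀ j (c : C j), smx j c = Real.exp (∫ z, Real.log (p j z c) ∂(μ j)) / Zstar j) :
    ((∀ c : ∀ j, C j, 0 ≤ ∏ j, smx j (c j)) ∧ (∑ c : ∀ j, C j, ∏ j, smx j (c j)) = 1)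
    ∧ (∀ q : (∀ j, C j) → ℝ, (∀ c, 0 ≤ q c) → (∑ c, q c) = 1 →
        (-(∑ j, Real.log (Zstar j)) ≤
          ∫ z, ∑ c, q c * (Real.log (q c) - Real.log (∏ j, p j (z j) (c j)))
            ∂(Measure.pi μ))
        ∧ ((∫ z, ∑ c, q c * (Real.log (q c) - Real.log (∏ j, p j (z j) (c j)))
              ∂(Measure.pi μ) = -(∑ j, Real.log (Zstar j)))
            ↔ ∀ c, q c = ∏ j, smx j (c j))) := by
  set a : ∀ j, C j → ℝ := fun j c => ∫ z, log (p j z c) ∂μ j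
  obtain rfl : Zstar = fun j => ∑ c, exp (a j c) := funext hZstar
  obtain rfl : smx = fun j => softmax (a j) := funext₂ hsmx
  set w : (∀ j, C j) → ℝ := fun c => ∏ j, softmax (a j) (c j)
  have hwpos : ∀ c, 0 < w c := fun c => Finset.prod_pos fun j _ => softmax_pos (a j) (c j)
  have hwsum : ∑ c, w c = 1 := sum_prod_eq_one fun j => sum_softmax (a j)
  refine ⟨⟨fun c => (hwpos c).le, hwsum⟩, fun q hq0 hq1 => ?_⟩
  have hF : ∫ z, ∑ c, q c * (log (q c) - log (∏ j, p j (z j) (c j))) ∂Measure.pi μ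
      = ∑ c, q c * (log (q c) - log (w c)) - ∑ j, log (∑ c, exp (a j c)) := by
    have hlogw : ∀ c, log (w c) = ∑ j, a j (c j) - ∑ j, log (∑ c, exp (a j c)) := fun c => by
      simp only [w, log_prod fun j _ => (softmax_pos (a j) (c j)).ne', log_softmax,
        Finset.sum_sub_distrib]
    rw [integral_sum_mul_log_sub q fun c =>
      integrable_log_prod_pi μ (fun j z => hpos j z (c j)) (fun j => hint j (c j))]
    simp only [integral_log_prod_pi μ (fun j z => hpos j z _) (fun j => hint j _), hlogw,
      mul_sub, Finset.sum_sub_distrib, ← Finset.sum_mul, hq1]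
    ring
  have hsum : ∑ c, q c = ∑ c, w c := hq1.trans hwsum.symm
  rw [hF, le_sub_iff_add_le, neg_add_cancel, sub_eq_neg_self]
  exact ⟨sum_mul_log_sub_log_nonneg hq0 hwpos hsum, sum_mul_log_sub_log_eq_zero_iff hq0 hwpos hsum⟩

/-- Multi-Facet VaDE Trick for factorized posterior and prior: the product of the
per-facet softmax pmfs is a pmf on `Π j, C j`, and it is the unique minimizer of the
expected KL objective, with minimum value `−Σ_j log Z_j*`. -/
theorem multi_facet_vade_trick_factorized
    {J : ℕ} (hJ : 1 ≤ J)
    {Z : Fin J → Type*} [∀ j, MeasurableSpace (Z j)]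
    (μ : ∀ j, Measure (Z j)) [∀ j, IsProbabilityMeasure (μ j)]
    {C : Fin J → Type*} [∀ j, Fintype (C j)] [∀ j, Nonempty (C j)]
    (p : ∀ j, Z j → C j → ℝ)
    (hpos : ∀ j (z : Z j) (c : C j), 0 < p j z c)
    (hsum : ∀ j (z : Z j), ∑ c, p j z c = 1)
    (hmeas : ∀ j (c : C j), Measurable fun z => Real.log (p j z c))
    (hint : ∀ j (c : C j), Integrable (fun z => Real.log (p j z c)) (μ j))
    (Zstar : Fin J → ℝ)
    (hZstar : ∀ j, Zstar j = ∑ c, Real.exp (∫ z, Real.log (p j z c) ∂(μ j)))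
    (smx : ∀ j, C j → ℝ)
    (hsmx : ∀ j (c : C j), smx j c = Real.exp (∫ z, Real.log (p j z c) ∂(μ j)) / Zstar j) :
    ((∀ c : ∀ j, C j, 0 ≤ ∏ j, smx j (c j)) ∧ (∑ c : ∀ j, C j, ∏ j, smx j (c j)) = 1)
    ∧ (∀ q : (∀ j, C j) → ℝ, (∀ c, 0 ≤ q c) → (∑ c, q c) = 1 →
        (-(∑ j, Real.log (Zstar j)) ≤
          ∫ z, ∑ c, q c * (Real.log (q c) - Real.log (∏ j, p j (z j) (c j)))
            ∂(Measure.pi μ))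
        ∧ ((∫ z, ∑ c, q c * (Real.log (q c) - Real.log (∏ j, p j (z j) (c j)))
              ∂(Measure.pi μ) = -(∑ j, Real.log (Zstar j)))
            ↔ ∀ c, q c = ∏ j, smx j (c j))) :=
  multi_facet_vade_trick_factorized_general μ p hpos hint Zstar hZstar smx hsmx
end
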